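/- Let L = L₀ ⊕ L₁ be a nilpotent complex Leibniz superalgebra of total dimension d = dim L₀ + dim L₁. If dim(L/L²) ≥ 3 (i.e. L cannot be generated by two elements), then the nilindex of L is less than d; equivalently, L^{d−1} = 0. -/

import Mathlib

/-- A complex Leibniz superalgebra structure on a vector space `V`:
a bilinear bracket together with an internal ℤ₂-grading `V = L0 ⊕ L1`
such that the bracket respects the grading and the Leibniz superidentity
`[x,[y,z]] = [[x,y],z] − (−1)^{αβ}[[x,z],y]` holds for homogeneous `y, z`. -/
structure LeibnizSuperAlg (V : Type*) [AddCommGroup V] [Module ℂ V] where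
  br : V →ₗ[ℂ] V →ₗ[ℂ] V
  L0 : Submodule ℂ V
  L1 : Submodule ℂ V
  compl : IsCompl L0 L1
  grade00 : ∀ x ∈ L0, ∀ y ∈ L0, br x y ∈ L0
  grade01 : ∀ x ∈ L0, ∀ y ∈ L1, br x y ∈ L1
  grade10 : ∀ x ∈ L1, ∀ y ∈ L0, br x y ∈ L1
  grade11 : ∀ x ∈ L1, ∀ y ∈ L1, br x y ∈ L0
  super_ee : ∀ (x : V), ∀ y ∈ L0, ∀ z ∈ L0,
    br x (br y z) = br (br x y) z - br (br x z) y
  super_eo : ∀ (x : V), ∀ y ∈ L0, ∀ z ∈ L1,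
    br x (br y z) = br (br x y) z - br (br x z) y
  super_oe : ∀ (x : V), ∀ y ∈ L1, ∀ z ∈ L0,
    br x (br y z) = br (br x y) z - br (br x z) y
  super_oo : ∀ (x : V), ∀ y ∈ L1, ∀ z ∈ L1,
    br x (br y z) = br (br x y) z + br (br x z) y

namespace LeibnizSuperAlg

variable {V : Type*} [AddCommGroup V] [Module ℂ V]

/-- The span of all products `[u,v]` with `u ∈ S`, `v ∈ T`. -/
def prodSpan (A : LeibnizSuperAlg V) (S T : Submodule ℂ V) : Submodule ℂ V :=
  Submodule.span ℂ {z : V | ∃ u ∈ S, ∃ v ∈ T, z = A.br u v}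

/-- `A.lcs k` is the `(k+1)`-st term `L^{k+1}` of the descending central series:
`L¹ = L`, `L^{k+1} = [L^k, L]`. -/
def lcs (A : LeibnizSuperAlg V) : ℕ → Submodule ℂ V
  | 0 => ⊤
  | k + 1 => A.prodSpan (lcs A k) ⊤

/-- `A.lcs0 k` is the `(k+1)`-st term `L₀^{k+1}` of the descending central series
of the even part: `L₀¹ = L₀`, `L₀^{k+1} = [L₀^k, L₀]`. -/
def lcs0 (A : LeibnizSuperAlg V) : ℕ → Submodule ℂ V
  | 0 => A.L0
  | k + 1 => A.prodSpan (lcs0 A k) A.L0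

/-- Nilpotency: some term of the descending central series vanishes. -/
def IsNilpotent (A : LeibnizSuperAlg V) : Prop := ∃ s, A.lcs s = ⊥

/-- `S` generates `L`: the smallest subspace containing `S` and closed under the
product is `L` itself. -/
def Generates (A : LeibnizSuperAlg V) (S : Set V) : Prop :=
  ∀ W : Submodule ℂ V, S ⊆ W → (∀ u ∈ W, ∀ v ∈ W, A.br u v ∈ W) → W = ⊤

/-- The operator of right multiplication `R_x : z ↦ [z, x]`. -/
def R (A : LeibnizSuperAlg V) (x : V) : V →ₗ[ℂ] V := A.br.flip x

end LeibnizSuperAlg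

/-!
The descending central series of a nilpotent algebra decreases strictly until it reaches `0`,
since `L^{k+1} = L^k` forces `L^{k+m} = L^k` for all `m`. Each strict step loses a dimension, so
`dim L^{2+j} ≤ dim L² - j`. As `dim L² ≤ d - 3`, this gives `L^{d-1} = 0`.
-/

namespace LeibnizSuperAlg

variable {V : Type*} [AddCommGroup V] [Module ℂ V] (A : LeibnizSuperAlg V)

lemma prodSpan_mono_left {S S' : Submodule ℂ V} (T : Submodule ℂ V) (h : S ≤ S') :
    A.prodSpan S T ≤ A.prodSpan S' T :=
  Submodule.span_mono fun _ ⟨u, hu, v, hv, huv⟩ => ⟨u, h hu, v, hv, huv⟩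

lemma lcs_succ_le : ∀ k, A.lcs (k + 1) ≤ A.lcs k
  | 0 => le_top
  | k + 1 => A.prodSpan_mono_left ⊤ (lcs_succ_le k)

lemma lcs_antitone : Antitone A.lcs :=
  antitone_nat_of_succ_le A.lcs_succ_le

lemma lcs_add_eq_of_lcs_succ_eq {k : ℕ} (h : A.lcs (k + 1) = A.lcs k) :
    ∀ m, A.lcs (k + m) = A.lcs k
  | 0 => rfl
  | m + 1 => by
    change A.prodSpan (A.lcs (k + m)) ⊤ = A.lcs k
    rw [lcs_add_eq_of_lcs_succ_eq h m]
    exact h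

lemma IsNilpotent.lcs_succ_lt {A : LeibnizSuperAlg V} (hA : A.IsNilpotent) {k : ℕ}
    (hk : A.lcs k ≠ ⊥) : A.lcs (k + 1) < A.lcs k := by
  refine lt_of_le_of_ne (A.lcs_succ_le k) fun h => hk ?_
  obtain ⟨s, hs⟩ := hA
  rw [← A.lcs_add_eq_of_lcs_succ_eq h s, eq_bot_iff, ← hs]
  exact A.lcs_antitone (Nat.le_add_left s k)

lemma IsNilpotent.finrank_lcs_add_le [FiniteDimensional ℂ V] {A : LeibnizSuperAlg V}
    (hA : A.IsNilpotent) (j : ℕ) :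
    ∀ k, Module.finrank ℂ (A.lcs (j + k)) ≤ Module.finrank ℂ (A.lcs j) - k
  | 0 => le_rfl
  | k + 1 => by
    have ih := hA.finrank_lcs_add_le j k
    by_cases hk : A.lcs (j + k) = ⊥
    · have hbot : A.lcs (j + k + 1) = ⊥ := le_bot_iff.mp (hk ▸ A.lcs_succ_le (j + k))
      rw [← add_assoc, hbot, finrank_bot]
      exact Nat.zero_le _
    · have := Submodule.finrank_lt_finrank_of_lt (hA.lcs_succ_lt hk)
      rw [← add_assoc]
      omega

end LeibnizSuperAlg

/-- A nilpotent complex Leibniz superalgebra of total dimension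
`d = dim L₀ + dim L₁` with `dim(L/L²) ≥ 3` has nilindex less than `d`,
i.e. `L^{d−1} = 0`. -/
theorem statement11 {V : Type*} [AddCommGroup V] [Module ℂ V] [FiniteDimensional ℂ V]
    (A : LeibnizSuperAlg V) (hnil : A.IsNilpotent) (d : ℕ)
    (hd : d = Module.finrank ℂ A.L0 + Module.finrank ℂ A.L1)
    (h3 : 3 ≤ Module.finrank ℂ (V ⧸ A.lcs 1)) :
    A.lcs (d - 2) = ⊥ := by
  have hV : Module.finrank ℂ V = d := by
    rw [hd, Submodule.finrank_add_eq_of_isCompl A.compl]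
  have hsq : Module.finrank ℂ (A.lcs 1) + 3 ≤ d := by
    have := Submodule.finrank_quotient_add_finrank (A.lcs 1)
    omega
  have hdrop := hnil.finrank_lcs_add_le 1 (d - 3)
  rw [show d - 2 = 1 + (d - 3) by omega, ← Submodule.finrank_eq_zero]
  omega
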